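/- arXiv:2603.03251 — 2 statements merged into one kernel-verified Lean document; each statement's English description precedes it below -/
import Mathlib

section
/- With the Saguaro sampling scheme p_C as above and a fixed target distribution q, define the residual mass u_C(t) := max(q(t) - p_C(t), 0), in(C) := Σ_{t∈S} u_C(t), out(C) := Σ_{t∉S} u_C(t), and p_hit(C) := in(C)/(in(C) + out(C)) (equal to 1 if the denominator is 0). Then p_hit(C) is nonincreasing in C on C > 0. -/
/-! Raising `C` moves draft mass into the cache: `C a / (C A + B)` increases and `a / (C A + B)`
decreases in `C`. The residual `max (q - p) 0` is antitone in `p`, so the cached residual mass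
`in` decreases while the uncached mass `out` increases, and `in / (in + out)` can only drop. -/

open Finset

noncomputable def hitRate (a b : ℝ) : ℝ :=
  if a + b = 0 then 1 else a / (a + b)

lemma hitRate_le_hitRate {a a' b b' : ℝ} (ha' : 0 ≤ a') (hb : 0 ≤ b)
    (haa' : a' ≤ a) (hbb' : b ≤ b') : hitRate a' b' ≤ hitRate a b := by
  unfold hitRate
  by_cases h' : a' + b' = 0
  · have hb0 : b = 0 := by linarith
    by_cases h : a + b = 0
    · rw [if_pos h', if_pos h]
    · rw [if_pos h', if_neg h, hb0, add_zero, div_self (by simpa [hb0] using h)]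
  · have hpos' : 0 < a' + b' := lt_of_le_of_ne (by linarith) (Ne.symm h')
    by_cases h : a + b = 0
    · rw [if_neg h', if_pos h, div_le_one hpos']
      linarith
    · have hpos : 0 < a + b := lt_of_le_of_ne (by linarith) (Ne.symm h)
      rw [if_neg h', if_neg h, div_le_div_iff₀ hpos' hpos]
      nlinarith [mul_le_mul_of_nonneg_left hbb' (ha'.trans haa'),
        mul_le_mul_of_nonneg_right haa' hb]

section Reweighting

variable {a A B C C' : ℝ}

lemma mul_div_mul_add_le_mul_div_mul_add (ha : 0 ≤ a) (hA : 0 ≤ A) (hB : 0 ≤ B)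
    (hC : 0 < C) (hCC' : C ≤ C') : C * a / (C * A + B) ≤ C' * a / (C' * A + B) := by
  have hC' : 0 < C' := hC.trans_le hCC'
  rcases (show 0 ≤ C * A + B by positivity).eq_or_lt with hZ | hZ
  · rw [← hZ, div_zero]
    positivity
  · rw [div_le_div_iff₀ hZ (by nlinarith)]
    nlinarith [mul_nonneg (mul_nonneg (sub_nonneg.mpr hCC') ha) hB]

lemma div_mul_add_le_div_mul_add (ha : 0 ≤ a) (hA : 0 ≤ A) (hB : 0 ≤ B)
    (hC : 0 < C) (hCC' : C ≤ C') : a / (C' * A + B) ≤ a / (C * A + B) := by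
  rcases (show 0 ≤ C * A + B by positivity).eq_or_lt with hZ | hZ
  · have hA0 : A = 0 := by nlinarith
    have hB0 : B = 0 := by nlinarith
    simp [hA0, hB0]
  · exact div_le_div_of_nonneg_left ha hZ (by nlinarith)

end Reweighting

lemma max_sub_le_max_sub {q p p' : ℝ} (h : p ≤ p') : max (q - p') 0 ≤ max (q - p) 0 :=
  max_le_max_right 0 (sub_le_sub_left h q)

theorem saguaro_phit_antitone_general {V : Type*} [Fintype V] [DecidableEq V]
    (z : V → ℝ) (S : Finset V) (q : V → ℝ)
    (w : V → ℝ) (hw : ∀ t, w t = Real.exp (z t))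
    (Z : ℝ → ℝ) (hZ : ∀ C, Z C = C * ∑ t ∈ S, w t + ∑ t ∈ Sᶜ, w t)
    (p : ℝ → V → ℝ)
    (hp : ∀ C t, p C t = if t ∈ S then C * w t / Z C else w t / Z C)
    (u : ℝ → V → ℝ) (hu : ∀ C t, u C t = max (q t - p C t) 0)
    (inn out phit : ℝ → ℝ)
    (hin : ∀ C, inn C = ∑ t ∈ S, u C t)
    (hout : ∀ C, out C = ∑ t ∈ Sᶜ, u C t)
    (hphit : ∀ C, phit C =
      if inn C + out C = 0 then 1 else inn C / (inn C + out C)) :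
    ∀ C C' : ℝ, 0 < C → C ≤ C' → phit C' ≤ phit C := by
  intro C C' hC hCC'
  have hw0 : ∀ t, 0 ≤ w t := fun t => (hw t).symm ▸ (Real.exp_pos _).le
  have hA : 0 ≤ ∑ t ∈ S, w t := sum_nonneg fun t _ => hw0 t
  have hB : 0 ≤ ∑ t ∈ Sᶜ, w t := sum_nonneg fun t _ => hw0 t
  have hu0 : ∀ D t, 0 ≤ u D t := fun D t => (hu D t).symm ▸ le_max_right _ _
  have hinn : inn C' ≤ inn C := by
    rw [hin, hin]
    refine sum_le_sum fun t ht => ?_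
    rw [hu, hu, hp, hp, if_pos ht, if_pos ht, hZ, hZ]
    exact max_sub_le_max_sub (mul_div_mul_add_le_mul_div_mul_add (hw0 t) hA hB hC hCC')
  have hout_le : out C ≤ out C' := by
    rw [hout, hout]
    refine sum_le_sum fun t ht => ?_
    rw [hu, hu, hp, hp, if_neg (mem_compl.mp ht), if_neg (mem_compl.mp ht), hZ, hZ]
    exact max_sub_le_max_sub (div_mul_add_le_div_mul_add (hw0 t) hA hB hC hCC')
  rw [hphit, hphit]
  exact hitRate_le_hitRate (hin C' ▸ sum_nonneg fun t _ => hu0 C' t)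
    (hout C ▸ sum_nonneg fun t _ => hu0 C t) hinn hout_le

/-- the cache hit rate of the Saguaro sampling scheme is
    nonincreasing in the downweighting constant C. -/
theorem saguaro_phit_antitone {V : Type*} [Fintype V] [DecidableEq V]
    (z : V → ℝ) (S : Finset V) (q : V → ℝ)
    (hq0 : ∀ t, 0 ≤ q t) (hq1 : ∑ t, q t = 1)
    (w : V → ℝ) (hw : ∀ t, w t = Real.exp (z t))
    (Z : ℝ → ℝ) (hZ : ∀ C, Z C = C * ∑ t ∈ S, w t + ∑ t ∈ Sᶜ, w t)
    (p : ℝ → V → ℝ)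
    (hp : ∀ C t, p C t = if t ∈ S then C * w t / Z C else w t / Z C)
    (hS : S.Nonempty) (hSc : (Sᶜ : Finset V).Nonempty)
    (u : ℝ → V → ℝ) (hu : ∀ C t, u C t = max (q t - p C t) 0)
    (inn out phit : ℝ → ℝ)
    (hin : ∀ C, inn C = ∑ t ∈ S, u C t)
    (hout : ∀ C, out C = ∑ t ∈ Sᶜ, u C t)
    (hphit : ∀ C, phit C =
      if inn C + out C = 0 then 1 else inn C / (inn C + out C)) :
    ∀ C C' : ℝ, 0 < C → C ≤ C' → phit C' ≤ phit C :=
  saguaro_phit_antitone_general z S q w hw Z hZ p hp u hu inn out phit hin hout hphit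
end

section
/- Under speculative decoding rejection sampling with target q and draft p on a finite vocabulary—where a token x ~ p is accepted with probability min(1, q(x)/p(x)), and upon rejection a token is drawn from the residual r(x) ∝ max(q(x) − p(x), 0)—the marginal distribution of the output token is exactly q. -/
/-- losslessness of speculative decoding: the marginal of the
    output token is exactly the target distribution q. -/
theorem speculative_decoding_lossless {V : Type*} [Fintype V]
    (q p : V → ℝ)
    (hq0 : ∀ x, 0 ≤ q x) (hq1 : ∑ x, q x = 1)
    (hp0 : ∀ x, 0 ≤ p x) (hp1 : ∑ x, p x = 1)
    (hne : q ≠ p)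
    (accept : V → ℝ)
    (haccept : ∀ x, accept x = if p x = 0 then 1 else min 1 (q x / p x))
    (r : V → ℝ)
    (hr : ∀ x, r x = max (q x - p x) 0 / ∑ y, max (q y - p y) 0) :
    ∀ x, p x * accept x + (∑ y, p y * (1 - accept y)) * r x = q x := by
  have hmin : ∀ x, p x * accept x = min (p x) (q x) := by
    intro x
    rw [haccept x]
    by_cases h : p x = 0
    · simp [h, min_eq_left (hq0 x)]
    · have hpx : 0 < p x := lt_of_le_of_ne (hp0 x) (Ne.symm h)
      rw [if_neg h, mul_min_of_nonneg _ _ (hp0 x), mul_one,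
        mul_div_cancel₀ _ h]
  have hrej : ∀ y, p y * (1 - accept y) = max (p y - q y) 0 := by
    intro y
    have := hmin y
    rcases le_total (p y) (q y) with h | h
    · rw [mul_sub, mul_one, this, min_eq_left h, max_eq_right (by linarith)]
      ring
    · rw [mul_sub, mul_one, this, min_eq_right h, max_eq_left (by linarith)]
  set S := ∑ y, max (q y - p y) 0 with hS
  have hsum : (∑ y, p y * (1 - accept y)) = S := by
    have : ∀ y : V, max (p y - q y) 0 - max (q y - p y) 0 = p y - q y := by
      intro y
      rcases le_total (p y) (q y) with h | h
      · rw [max_eq_right (by linarith), max_eq_left (by linarith)]; ring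
      · rw [max_eq_left (by linarith), max_eq_right (by linarith)]; ring
    have h2 : (∑ y, p y * (1 - accept y)) - S =
        ∑ y, (p y - q y) := by
      rw [hS, ← Finset.sum_sub_distrib]
      exact Finset.sum_congr rfl fun y _ => by rw [hrej y, this y]
    rw [Finset.sum_sub_distrib, hp1, hq1] at h2
    linarith
  have hSpos : 0 < S := by
    rcases lt_or_eq_of_le (Finset.sum_nonneg fun y _ => le_max_right _ _ :
        (0:ℝ) ≤ S) with h | h
    · exact h
    exfalso
    apply hne
    have hle : ∀ x, q x ≤ p x := by
      intro x
      have hx : max (q x - p x) 0 = 0 :=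
        le_antisymm (by
          have := Finset.sum_eq_zero_iff_of_nonneg
            (fun y _ => le_max_right (q y - p y) 0) |>.mp h.symm x (Finset.mem_univ x)
          exact le_of_eq this) (le_max_right _ _)
      have := le_max_left (q x - p x) 0
      linarith [hx ▸ this]
    funext x
    have := (Finset.sum_eq_sum_iff_of_le (fun y _ => hle y)).mp
      (by rw [hq1, hp1]) x (Finset.mem_univ x)
    linarith
  intro x
  rw [hr x, hmin x, hsum, mul_div_cancel₀ _ (ne_of_gt hSpos)]
  rcases le_total (p x) (q x) with h | h
  · rw [min_eq_left h, max_eq_left (by linarith)]; ring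
  · rw [min_eq_right h, max_eq_right (by linarith)]; ring
end
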